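/- (a) For every Borel probability measure Q on [0, B]: ∫ r·(1 − F₁*(r)) dQ(r) ≤ L. (b) For every compatible CDF F: ∫ r·(1 − F(r)) dQ₁*(r) ≥ L. In other words, in the single-bidder pricing problem, the equal-revenue distribution F₁* caps the seller's expected revenue at L against every pricing distribution, and the log-uniform pricing distribution Q₁* guarantees the seller expected revenue at least L against every compatible value distribution. -/

import Mathlib

/-!
Against `F₁*` every posted price `r` earns `r (1 - F₁*(r)) ≤ L` (with equality on `[L, B)`), so
no mixture of prices earns more than `L`. Conversely `Q₁*` has density `1 / (r log (B / L))` on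
`(L, B]`; it cancels the price factor `r` in the revenue, which becomes
`(∫_L^B (1 - F)) / log (B / L)`. Since `1 - F ≤ 1` on `[0, L]`, this integral is at least
`μ - L = L log (B / L)`.
-/

open MeasureTheory Set Real

noncomputable def equalRevenueCDF (L B v : ℝ) : ℝ :=
  if v < L then 0 else if v < B then 1 - L / v else 1

noncomputable def logUniformCDF (L B r : ℝ) : ℝ :=
  if r < L then 0 else if r ≤ B then log (r / L) / log (B / L) else 1

noncomputable def logUniform (L B : ℝ) : Measure ℝ :=
  (volume.restrict (Ioc L B)).withDensity fun r => ENNReal.ofReal (log (B / L) * r)⁻¹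

theorem integral_le_of_forall_le {Ω : Type*} [MeasurableSpace Ω] {Q : Measure Ω}
    [IsProbabilityMeasure Q] {f : Ω → ℝ} {c : ℝ} (hc : 0 ≤ c) (hf : ∀ x, f x ≤ c) :
    ∫ x, f x ∂Q ≤ c := by
  by_cases hint : Integrable f Q
  · simpa using integral_mono hint (integrable_const c) hf
  · rwa [integral_undef hint]

theorem mul_one_sub_equalRevenueCDF_le {L : ℝ} (B : ℝ) (hL : 0 ≤ L) (r : ℝ) :
    r * (1 - equalRevenueCDF L B r) ≤ L := by
  unfold equalRevenueCDF
  split_ifs with hrL hrB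
  · linarith
  · rcases eq_or_ne r 0 with rfl | hr
    · simpa using hL
    · rw [sub_sub_cancel, mul_div_cancel₀ _ hr]
  · simpa using hL

theorem integral_Ioc_inv_mul {L m : ℝ} (c : ℝ) (hL : 0 < L) (hm : L ≤ m) :
    ∫ r in Ioc L m, (c * r)⁻¹ = log (m / L) / c := by
  rw [← intervalIntegral.integral_of_le hm]
  simp only [mul_inv]
  rw [intervalIntegral.integral_const_mul, integral_inv_of_pos hL (hL.trans_le hm)]
  ring

theorem lintegral_Ioc_ofReal_inv_mul {c L m : ℝ} (hc : 0 < c) (hL : 0 < L) (hm : L ≤ m) :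
    ∫⁻ r in Ioc L m, ENNReal.ofReal (c * r)⁻¹ = ENNReal.ofReal (log (m / L) / c) := by
  have hpos : ∀ r ∈ Icc L m, 0 < r := fun r hr => hL.trans_le hr.1
  have hint : IntegrableOn (fun r => (c * r)⁻¹) (Icc L m) :=
    (continuousOn_const.mul continuousOn_id).inv₀
      (fun r hr => (mul_pos hc (hpos r hr)).ne') |>.integrableOn_Icc
  rw [← integral_Ioc_inv_mul c hL hm, ofReal_integral_eq_lintegral_ofReal
    (hint.mono_set Ioc_subset_Icc_self)]
  filter_upwards [ae_restrict_mem measurableSet_Ioc] with r hr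
  exact inv_nonneg.2 (mul_pos hc (hpos r (Ioc_subset_Icc_self hr))).le

theorem logUniform_Iic {L B : ℝ} (hL : 0 < L) (hLB : L < B) (a : ℝ) :
    logUniform L B (Iic a) = ENNReal.ofReal (logUniformCDF L B a) := by
  have hc : 0 < log (B / L) := log_pos ((one_lt_div hL).2 hLB)
  have hset : Iic a ∩ Ioc L B = Ioc L (min a B) := by
    ext x; simp only [mem_inter_iff, mem_Iic, mem_Ioc, le_min_iff]; tauto
  rw [logUniform, withDensity_apply _ measurableSet_Iic,
    Measure.restrict_restrict measurableSet_Iic, hset, logUniformCDF]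
  split_ifs with haL haB
  · simp [Ioc_eq_empty_of_le ((min_le_left a B).trans haL.le)]
  · rw [min_eq_left haB, lintegral_Ioc_ofReal_inv_mul hc hL (not_lt.1 haL)]
  · rw [min_eq_right (not_le.1 haB).le, lintegral_Ioc_ofReal_inv_mul hc hL hLB.le,
      div_self hc.ne']

theorem eq_logUniform_of_cdf {L B : ℝ} (hL : 0 < L) (hLB : L < B) (Q : Measure ℝ)
    [IsFiniteMeasure Q] (hQ : ∀ r, (Q (Iic r)).toReal = logUniformCDF L B r) :
    Q = logUniform L B :=
  Measure.ext_of_Iic Q _ fun a => by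
    rw [logUniform_Iic hL hLB, ← hQ, ENNReal.ofReal_toReal (measure_ne_top Q _)]

theorem integral_mul_logUniform {L B : ℝ} (hL : 0 < L) (hLB : L ≤ B) (g : ℝ → ℝ) :
    ∫ r, r * g r ∂logUniform L B = (log (B / L))⁻¹ * ∫ r in L..B, g r := by
  rw [logUniform, integral_withDensity_eq_integral_toReal_smul (by fun_prop)
    (.of_forall fun _ => ENNReal.ofReal_lt_top), intervalIntegral.integral_of_le hLB,
    ← integral_const_mul]
  refine setIntegral_congr_fun measurableSet_Ioc fun r hr => ?_
  have hr : 0 < r := hL.trans hr.1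
  have hc : 0 ≤ log (B / L) := log_nonneg ((one_le_div hL).2 hLB)
  rw [ENNReal.toReal_ofReal (by positivity), smul_eq_mul]
  field_simp

theorem integral_le_add_integral_of_le_one {f : ℝ → ℝ} {a b c : ℝ} (hab : a ≤ b)
    (hf : ∀ x ∈ Icc a b, f x ≤ 1) (hfab : IntervalIntegrable f volume a b)
    (hfbc : IntervalIntegrable f volume b c) :
    ∫ x in a..c, f x ≤ (b - a) + ∫ x in b..c, f x := by
  rw [← intervalIntegral.integral_add_adjacent_intervals hfab hfbc]
  gcongr
  simpa using intervalIntegral.integral_mono_on hab hfab intervalIntegrable_const hf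

theorem single_bidder_maxmin_general (B μ L : ℝ)
    (hL : L ∈ Set.Ioo (0 : ℝ) B) (hLμ : L * (1 + Real.log (B / L)) = μ)
    (F1 : ℝ → ℝ)
    (hF1 : ∀ v, F1 v = if v < L then 0 else if v < B then 1 - L / v else 1)
    (Q1 : Measure ℝ) [IsProbabilityMeasure Q1]
    (hQ1 : ∀ r, (Q1 (Set.Iic r)).toReal =
      if r < L then 0 else if r ≤ B then Real.log (r / L) / Real.log (B / L) else 1) :
    (∀ Q : Measure ℝ, IsProbabilityMeasure Q → Q (Set.Icc 0 B) = 1 →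
      (∫ r, r * (1 - F1 r) ∂Q) ≤ L) ∧
    (∀ F : ℝ → ℝ, Monotone F → (∀ x, ContinuousWithinAt F (Set.Ici x) x) →
      (∀ v, F v ∈ Set.Icc (0 : ℝ) 1) → (∀ v, v < 0 → F v = 0) → (∀ v, B ≤ v → F v = 1) →
      (∫ v in (0 : ℝ)..B, (1 - F v)) = μ →
      (∫ r, r * (1 - F r) ∂Q1) ≥ L) := by
  obtain ⟨hL0, hLB⟩ := hL
  have hF1_eq : F1 = equalRevenueCDF L B := funext hF1
  refine ⟨fun Q _ _ => ?_, fun F hF _ hF01 _ _ hFμ => ?_⟩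
  · rw [hF1_eq]
    exact integral_le_of_forall_le hL0.le (mul_one_sub_equalRevenueCDF_le B hL0.le)
  · have hc : 0 < log (B / L) := log_pos ((one_lt_div hL0).2 hLB)
    have hint : ∀ a b, IntervalIntegrable (fun v => 1 - F v) volume a b := fun _ _ =>
      intervalIntegrable_const.sub hF.intervalIntegrable
    have hμ : μ ≤ L + ∫ v in L..B, (1 - F v) := by
      simpa [← hFμ] using integral_le_add_integral_of_le_one hL0.le
        (fun v _ => by linarith [(hF01 v).1]) (hint 0 L) (hint L B)
    rw [eq_logUniform_of_cdf hL0 hLB Q1 hQ1, integral_mul_logUniform hL0 hLB.le, ge_iff_le,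
      le_inv_mul_iff₀ hc]
    linarith

/-- Single-bidder max-min pricing (Carrasco et al.): (a) against the equal-revenue
value distribution `F₁*`, every pricing distribution `Q` on `[0, B]` earns expected
revenue at most `L`; (b) the log-uniform pricing distribution `Q₁*` (the measure on
`[L, B]` with CDF `log(r/L)/log(B/L)`) guarantees expected revenue at least `L`
against every value distribution with mean `μ` and support in `[0, B]`. -/
theorem single_bidder_maxmin (B μ L : ℝ) (hB : 0 < B) (hμ0 : 0 < μ) (hμB : μ < B)
    (hL : L ∈ Set.Ioo (0 : ℝ) B) (hLμ : L * (1 + Real.log (B / L)) = μ)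
    (F1 : ℝ → ℝ)
    (hF1 : ∀ v, F1 v = if v < L then 0 else if v < B then 1 - L / v else 1)
    (Q1 : Measure ℝ) [IsProbabilityMeasure Q1]
    (hQ1 : ∀ r, (Q1 (Set.Iic r)).toReal =
      if r < L then 0 else if r ≤ B then Real.log (r / L) / Real.log (B / L) else 1) :
    (∀ Q : Measure ℝ, IsProbabilityMeasure Q → Q (Set.Icc 0 B) = 1 →
      (∫ r, r * (1 - F1 r) ∂Q) ≤ L) ∧
    (∀ F : ℝ → ℝ, Monotone F → (∀ x, ContinuousWithinAt F (Set.Ici x) x) →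
      (∀ v, F v ∈ Set.Icc (0 : ℝ) 1) → (∀ v, v < 0 → F v = 0) → (∀ v, B ≤ v → F v = 1) →
      (∫ v in (0 : ℝ)..B, (1 - F v)) = μ →
      (∫ r, r * (1 - F r) ∂Q1) ≥ L) :=
  single_bidder_maxmin_general B μ L hL hLμ F1 hF1 Q1 hQ1
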